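/- arXiv:1009.5948 — 2 statements merged into one kernel-verified Lean document; each statement's English description precedes it below -/
import Mathlib

section
/- Let x : ℝ → ℝ be continuously differentiable and 2π-periodic with ∫₀^{2π} x(θ) dθ = 0. Then for every θ ∈ ℝ, |x(θ)|² ≤ π ∫₀^{2π} |x'(s)|² ds; equivalently, sup_{θ ∈ ℝ} |x(θ)|² ≤ π ∫₀^{2π} |x'(s)|² ds. -/
/-!
A continuous mean-zero function vanishes at some `θ₀`. By periodicity every value `x θ` is also
taken at a point `θ'` with `|θ' - θ₀| ≤ π`, and the fundamental theorem of calculus together with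
Cauchy–Schwarz gives `x θ' ^ 2 ≤ |θ' - θ₀| ∫ x' ^ 2` over the interval between `θ₀` and `θ'`,
which lies inside one period.
-/

open Real MeasureTheory Set
open scoped Interval

theorem Function.Periodic.deriv {𝕜 F : Type*} [NontriviallyNormedField 𝕜] [NormedAddCommGroup F]
    [NormedSpace 𝕜 F] {f : 𝕜 → F} {c : 𝕜} (h : Function.Periodic f c) :
    Function.Periodic (deriv f) c := fun t => by
  rw [← deriv_comp_add_const, show (fun s => f (s + c)) = f from funext h]

theorem sq_setIntegral_le_measureReal_mul_setIntegral_sq {α : Type*} [MeasurableSpace α]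
    {μ : Measure α} {s : Set α} {f : α → ℝ} (hs : μ s ≠ ⊤) (hf : IntegrableOn f s μ)
    (hf2 : IntegrableOn (fun x => f x ^ 2) s μ) :
    (∫ x in s, f x ∂μ) ^ 2 ≤ μ.real s * ∫ x in s, f x ^ 2 ∂μ := by
  rcases eq_or_ne (μ s) 0 with hs0 | hs0
  · simp [Measure.restrict_eq_zero.mpr hs0]
  have hpos : 0 < μ.real s := ENNReal.toReal_pos hs0 hs
  have jensen := (Even.convexOn_pow (𝕜 := ℝ) even_two).map_set_average_le
    (continuous_pow 2).continuousOn isClosed_univ hs0 hs (by simp) hf hf2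
  rw [setAverage_eq, setAverage_eq, smul_eq_mul, smul_eq_mul, mul_pow, inv_pow,
    ← div_eq_inv_mul, ← div_eq_inv_mul, div_le_div_iff₀ (by positivity) hpos] at jensen
  nlinarith

theorem sq_sub_le_abs_sub_mul_setIntegral_deriv_sq {f : ℝ → ℝ} (hf : ContDiff ℝ 1 f) (a b : ℝ) :
    (f b - f a) ^ 2 ≤ |b - a| * ∫ s in Ι a b, deriv f s ^ 2 := by
  have hdf := hf.continuous_deriv le_rfl
  have hftc : ∫ s in a..b, deriv f s = f b - f a :=
    intervalIntegral.integral_deriv_eq_sub (fun t _ => hf.differentiable one_ne_zero t)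
      (hdf.intervalIntegrable _ _)
  calc (f b - f a) ^ 2 = (∫ s in Ι a b, deriv f s) ^ 2 := by
        rw [← hftc, ← sq_abs, ← Real.norm_eq_abs,
          intervalIntegral.norm_integral_eq_norm_integral_uIoc, Real.norm_eq_abs, sq_abs]
    _ ≤ volume.real (Ι a b) * ∫ s in Ι a b, deriv f s ^ 2 :=
        sq_setIntegral_le_measureReal_mul_setIntegral_sq (by simp)
          hdf.integrableOn_uIoc (hdf.pow 2).integrableOn_uIoc
    _ = |b - a| * ∫ s in Ι a b, deriv f s ^ 2 := by simp [measureReal_def]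

theorem exists_mem_uIoo_eq_zero_of_intervalIntegral_eq_zero {f : ℝ → ℝ} {a b : ℝ} (hab : a ≠ b)
    (hf : ContinuousOn f (uIcc a b)) (h : ∫ x in a..b, f x = 0) : ∃ c ∈ uIoo a b, f c = 0 := by
  simpa [interval_average_eq_div, h] using exists_eq_interval_average hab hf

theorem sq_le_half_period_mul_integral_deriv_sq_of_periodic {f : ℝ → ℝ} {c t₀ : ℝ}
    (hf : ContDiff ℝ 1 f) (hper : Function.Periodic f c) (hc : 0 < c) (h₀ : f t₀ = 0) (t : ℝ) :
    f t ^ 2 ≤ c / 2 * ∫ s in (0)..c, deriv f s ^ 2 := by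
  obtain ⟨t', ⟨hlo, hhi⟩, htt'⟩ := hper.exists_mem_Ioc hc t (t₀ - c / 2)
  have hdist : |t' - t₀| ≤ c / 2 := abs_sub_le_iff.2 ⟨by linarith, by linarith⟩
  have hsub : Ι t₀ t' ⊆ Ioc (t₀ - c / 2) (t₀ - c / 2 + c) :=
    Ioc_subset_Ioc (le_min (by linarith) hlo.le) (max_le (by linarith) hhi)
  have hdf2 : Continuous fun s => deriv f s ^ 2 := (hf.continuous_deriv le_rfl).pow 2
  have hperiod : ∫ s in Ioc (t₀ - c / 2) (t₀ - c / 2 + c), deriv f s ^ 2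
      = ∫ s in (0)..c, deriv f s ^ 2 := by
    rw [← intervalIntegral.integral_of_le (by linarith)]
    simpa using (hper.deriv.comp (· ^ 2)).intervalIntegral_add_eq (t₀ - c / 2) 0
  calc f t ^ 2 = (f t' - f t₀) ^ 2 := by rw [h₀, sub_zero, htt']
    _ ≤ |t' - t₀| * ∫ s in Ι t₀ t', deriv f s ^ 2 :=
        sq_sub_le_abs_sub_mul_setIntegral_deriv_sq hf t₀ t'
    _ ≤ c / 2 * ∫ s in Ioc (t₀ - c / 2) (t₀ - c / 2 + c), deriv f s ^ 2 :=
        mul_le_mul hdist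
          (setIntegral_mono_set hdf2.integrableOn_Ioc (ae_of_all _ fun _ => sq_nonneg _)
            hsub.eventuallyLE)
          (setIntegral_nonneg measurableSet_uIoc fun _ _ => sq_nonneg _) (by positivity)
    _ = c / 2 * ∫ s in (0)..c, deriv f s ^ 2 := by rw [hperiod]

/-- Sobolev-type sup-norm bound on the torus: a `C¹`, `2π`-periodic, mean-zero
function satisfies `|x θ|² ≤ π ∫₀^{2π} |x'|²` for every `θ`. -/
theorem sq_le_pi_mul_integral_deriv_sq_of_periodic_zero_mean
    (x : ℝ → ℝ) (hx : ContDiff ℝ 1 x)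
    (hper : ∀ θ : ℝ, x (θ + 2 * π) = x θ)
    (hmean : (∫ θ in (0:ℝ)..(2 * π), x θ) = 0) :
    ∀ θ : ℝ, |x θ| ^ 2 ≤ π * ∫ s in (0:ℝ)..(2 * π), |deriv x s| ^ 2 := by
  intro θ
  obtain ⟨θ₀, -, hθ₀⟩ := exists_mem_uIoo_eq_zero_of_intervalIntegral_eq_zero
    (by positivity) hx.continuous.continuousOn hmean
  simpa only [sq_abs, mul_div_cancel_left₀ π two_ne_zero] using
    sq_le_half_period_mul_integral_deriv_sq_of_periodic hx hper (by positivity) hθ₀ θ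
end

section
/- Let x, y : ℝ → ℝ be continuously differentiable and 2π-periodic with ∫₀^{2π} x(θ) dθ = 0 and ∫₀^{2π} y(θ) dθ = 0. Then |∫₀^{2π} (x(θ)x'(θ) − y(θ)y'(θ)) · (x(θ) − y(θ)) dθ| ≤ π · (∫₀^{2π} |x(θ) − y(θ)|² dθ)^{1/2} · ((∫₀^{2π} |x'(θ)|² dθ)^{1/2} + (∫₀^{2π} |y'(θ)|² dθ)^{1/2}) · (∫₀^{2π} |x'(θ) − y'(θ)|² dθ)^{1/2}. -/
/-!
A mean-zero `C¹` function `u` on `[0, 2π]` vanishes somewhere, so the fundamental theorem of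
calculus and Cauchy–Schwarz give `sup |u| ≤ √(2π) ‖u'‖ ≤ π ‖u'‖`. Since
`x x' - y y' = x (x' - y') + (x - y) y'`, each of the two terms tested against `x - y` is bounded
by the sup norm of its first factor times the `L²` norms of the other two.
-/

open Real MeasureTheory Set
open scoped Interval

section IntervalEstimates

variable {a b : ℝ}

theorem intervalIntegral_abs_mul_abs_le_sqrt_mul_sqrt (hab : a ≤ b) {f g : ℝ → ℝ}
    (hf : Continuous f) (hg : Continuous g) :
    ∫ t in a..b, |f t| * |g t| ≤ √(∫ t in a..b, f t ^ 2) * √(∫ t in a..b, g t ^ 2) := by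
  have memLp_two {h : ℝ → ℝ} (hh : Continuous h) :
      MemLp h (ENNReal.ofReal 2) (volume.restrict (Ioc a b)) := by
    rw [ENNReal.ofReal_ofNat, memLp_two_iff_integrable_sq hh.aestronglyMeasurable]
    exact ((hh.pow 2).intervalIntegrable a b).1
  have := integral_mul_norm_le_Lp_mul_Lq Real.HolderConjugate.two_two (memLp_two hf)
    (memLp_two hg)
  simp only [Real.norm_eq_abs, Real.rpow_two, sq_abs, ← Real.sqrt_eq_rpow] at this
  simpa only [intervalIntegral.integral_of_le hab] using this

theorem exists_eq_zero_of_intervalIntegral_eq_zero (hab : a < b) {f : ℝ → ℝ}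
    (hf : Continuous f) (hmean : ∫ t in a..b, f t = 0) : ∃ c ∈ Icc a b, f c = 0 := by
  obtain ⟨c, hc, hfc⟩ := exists_eq_interval_average hab.ne hf.continuousOn
  refine ⟨c, uIcc_of_le hab.le ▸ uIoo_subset_uIcc_self hc, ?_⟩
  rw [hfc, interval_average_eq_div, hmean, zero_div]

theorem abs_le_sqrt_mul_sqrt_integral_sq_of_eq_zero (hab : a ≤ b) {f f' : ℝ → ℝ}
    (hf : ∀ t, HasDerivAt f (f' t) t) (hf' : Continuous f') {c : ℝ} (hc : c ∈ Icc a b)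
    (hfc : f c = 0) {θ : ℝ} (hθ : θ ∈ Icc a b) :
    |f θ| ≤ √(b - a) * √(∫ t in a..b, f' t ^ 2) := by
  have hsub : Ι c θ ⊆ Ι a b := by
    rw [← uIcc_of_le hab] at hc hθ
    exact uIoc_subset_uIoc_of_uIcc_subset_uIcc (uIcc_subset_uIcc hc hθ)
  calc |f θ| = |∫ t in c..θ, f' t| := by
        rw [intervalIntegral.integral_eq_sub_of_hasDerivAt (fun t _ => hf t)
          (hf'.intervalIntegrable _ _), hfc, sub_zero]
    _ ≤ |(∫ t in c..θ, |f' t|)| := by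
        simpa only [Real.norm_eq_abs] using
          intervalIntegral.norm_integral_le_abs_integral_norm (f := f') (a := c) (b := θ)
    _ ≤ |(∫ t in a..b, |f' t|)| := intervalIntegral.abs_integral_mono_interval hsub
        (Filter.Eventually.of_forall fun t => abs_nonneg _) (hf'.abs.intervalIntegrable _ _)
    _ = ∫ t in a..b, |(1 : ℝ)| * |f' t| := by
        rw [abs_of_nonneg (intervalIntegral.integral_nonneg hab fun t _ => abs_nonneg _)]
        simp only [abs_one, one_mul]
    _ ≤ √(∫ t in a..b, (1 : ℝ) ^ 2) * √(∫ t in a..b, f' t ^ 2) :=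
        intervalIntegral_abs_mul_abs_le_sqrt_mul_sqrt hab continuous_const hf'
    _ = √(b - a) * √(∫ t in a..b, f' t ^ 2) := by simp

theorem abs_le_sqrt_mul_sqrt_integral_sq_of_intervalIntegral_eq_zero (hab : a < b)
    {f f' : ℝ → ℝ} (hf : ∀ t, HasDerivAt f (f' t) t) (hf' : Continuous f')
    (hmean : ∫ t in a..b, f t = 0) {θ : ℝ} (hθ : θ ∈ Icc a b) :
    |f θ| ≤ √(b - a) * √(∫ t in a..b, f' t ^ 2) := by
  have hcont : Continuous f := continuous_iff_continuousAt.2 fun t => (hf t).continuousAt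
  obtain ⟨c, hc, hfc⟩ := exists_eq_zero_of_intervalIntegral_eq_zero hab hcont hmean
  exact abs_le_sqrt_mul_sqrt_integral_sq_of_eq_zero hab.le hf hf' hc hfc hθ

theorem abs_intervalIntegral_mul_mul_le (hab : a ≤ b) {f p q : ℝ → ℝ} {M : ℝ}
    (hp : Continuous p) (hq : Continuous q) (hM : ∀ θ ∈ Icc a b, |f θ| ≤ M) :
    |∫ t in a..b, f t * (p t * q t)| ≤ M * (√(∫ t in a..b, p t ^ 2) * √(∫ t in a..b, q t ^ 2)) := by
  have hM₀ : 0 ≤ M := (abs_nonneg _).trans (hM a (left_mem_Icc.2 hab))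
  calc |∫ t in a..b, f t * (p t * q t)| ≤ ∫ t in a..b, M * (|p t| * |q t|) := by
        rw [← Real.norm_eq_abs]
        refine intervalIntegral.norm_integral_le_of_norm_le hab
          (Filter.Eventually.of_forall fun t ht => ?_)
          (((hp.abs.mul hq.abs).intervalIntegrable _ _).const_mul M)
        rw [Real.norm_eq_abs, abs_mul, abs_mul]
        exact mul_le_mul_of_nonneg_right (hM t (Ioc_subset_Icc_self ht)) (by positivity)
    _ = M * ∫ t in a..b, |p t| * |q t| := intervalIntegral.integral_const_mul _ _
    _ ≤ M * (√(∫ t in a..b, p t ^ 2) * √(∫ t in a..b, q t ^ 2)) :=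
        mul_le_mul_of_nonneg_left (intervalIntegral_abs_mul_abs_le_sqrt_mul_sqrt hab hp hq) hM₀

end IntervalEstimates

theorem sqrt_two_mul_pi_le_pi : √(2 * π) ≤ π :=
  Real.sqrt_le_iff.2 ⟨pi_pos.le, by nlinarith [pi_gt_three]⟩

theorem abs_le_pi_mul_sqrt_integral_sq_of_intervalIntegral_eq_zero {f f' : ℝ → ℝ}
    (hf : ∀ t, HasDerivAt f (f' t) t) (hf' : Continuous f')
    (hmean : ∫ t in (0:ℝ)..(2 * π), f t = 0) {θ : ℝ} (hθ : θ ∈ Icc 0 (2 * π)) :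
    |f θ| ≤ π * √(∫ t in (0:ℝ)..(2 * π), f' t ^ 2) := by
  refine (abs_le_sqrt_mul_sqrt_integral_sq_of_intervalIntegral_eq_zero two_pi_pos hf hf' hmean
    hθ).trans ?_
  rw [sub_zero]
  gcongr
  exact sqrt_two_mul_pi_le_pi

theorem burgers_nonlinearity_monotonicity_estimate_general
    (x y : ℝ → ℝ) (hx : ContDiff ℝ 1 x) (hy : ContDiff ℝ 1 y)
    (hmeanx : (∫ θ in (0:ℝ)..(2 * π), x θ) = 0)
    (hmeany : (∫ θ in (0:ℝ)..(2 * π), y θ) = 0) :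
    |∫ θ in (0:ℝ)..(2 * π), (x θ * deriv x θ - y θ * deriv y θ) * (x θ - y θ)|
      ≤ π * Real.sqrt (∫ θ in (0:ℝ)..(2 * π), |x θ - y θ| ^ 2)
          * (Real.sqrt (∫ θ in (0:ℝ)..(2 * π), |deriv x θ| ^ 2)
              + Real.sqrt (∫ θ in (0:ℝ)..(2 * π), |deriv y θ| ^ 2))
          * Real.sqrt (∫ θ in (0:ℝ)..(2 * π), |deriv x θ - deriv y θ| ^ 2) := by
  have hxd (t : ℝ) : HasDerivAt x (deriv x t) t := (hx.differentiable one_ne_zero t).hasDerivAt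
  have hyd (t : ℝ) : HasDerivAt y (deriv y t) t := (hy.differentiable one_ne_zero t).hasDerivAt
  have hx' := hx.continuous_deriv le_rfl
  have hy' := hy.continuous_deriv le_rfl
  have hxy : Continuous fun θ => x θ - y θ := hx.continuous.sub hy.continuous
  have hd : Continuous fun θ => deriv x θ - deriv y θ := hx'.sub hy'
  have hmean : ∫ θ in (0:ℝ)..(2 * π), (x θ - y θ) = 0 := by
    rw [intervalIntegral.integral_sub (hx.continuous.intervalIntegrable _ _)
      (hy.continuous.intervalIntegrable _ _), hmeanx, hmeany, sub_zero]
  have hsplit : ∫ θ in (0:ℝ)..(2 * π), (x θ * deriv x θ - y θ * deriv y θ) * (x θ - y θ)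
      = (∫ θ in (0:ℝ)..(2 * π), x θ * ((deriv x θ - deriv y θ) * (x θ - y θ)))
        + ∫ θ in (0:ℝ)..(2 * π), (x θ - y θ) * (deriv y θ * (x θ - y θ)) := by
    rw [← intervalIntegral.integral_add]
    · exact intervalIntegral.integral_congr fun θ _ => by ring
    · exact (hx.continuous.mul (hd.mul hxy)).intervalIntegrable _ _
    · exact (hxy.mul (hy'.mul hxy)).intervalIntegrable _ _
  have h₁ := abs_intervalIntegral_mul_mul_le two_pi_pos.le hd hxy fun θ hθ =>
    abs_le_pi_mul_sqrt_integral_sq_of_intervalIntegral_eq_zero hxd hx' hmeanx hθ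
  have h₂ := abs_intervalIntegral_mul_mul_le two_pi_pos.le hy' hxy fun θ hθ =>
    abs_le_pi_mul_sqrt_integral_sq_of_intervalIntegral_eq_zero (fun t => (hxd t).sub (hyd t))
      hd hmean hθ
  simp only [sq_abs]
  rw [hsplit]
  exact (abs_add_le _ _).trans ((add_le_add h₁ h₂).trans_eq (by ring))

/-- The estimate `|⟨B(x) − B(y), x − y⟩| ≤ π ‖x−y‖ (‖x‖_V + ‖y‖_V) ‖x−y‖_V`
used in the proof of Proposition 2.2 of the paper. -/
theorem burgers_nonlinearity_monotonicity_estimate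
    (x y : ℝ → ℝ) (hx : ContDiff ℝ 1 x) (hy : ContDiff ℝ 1 y)
    (hperx : ∀ θ : ℝ, x (θ + 2 * π) = x θ)
    (hpery : ∀ θ : ℝ, y (θ + 2 * π) = y θ)
    (hmeanx : (∫ θ in (0:ℝ)..(2 * π), x θ) = 0)
    (hmeany : (∫ θ in (0:ℝ)..(2 * π), y θ) = 0) :
    |∫ θ in (0:ℝ)..(2 * π), (x θ * deriv x θ - y θ * deriv y θ) * (x θ - y θ)|
      ≤ π * Real.sqrt (∫ θ in (0:ℝ)..(2 * π), |x θ - y θ| ^ 2)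
          * (Real.sqrt (∫ θ in (0:ℝ)..(2 * π), |deriv x θ| ^ 2)
              + Real.sqrt (∫ θ in (0:ℝ)..(2 * π), |deriv y θ| ^ 2))
          * Real.sqrt (∫ θ in (0:ℝ)..(2 * π), |deriv x θ - deriv y θ| ^ 2) :=
  burgers_nonlinearity_monotonicity_estimate_general x y hx hy hmeanx hmeany
end
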